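/- arXiv:math/0402020 — 11 statements merged into one kernel-verified Lean document; each statement's English description precedes it below -/
import Mathlib

section
/- Let A be a Leibniz algebra with product ∘ and let N : A → A be a linear map. Define the contracted product X ∘_N Y = N(X) ∘ Y + X ∘ N(Y) − N(X ∘ Y). Then the products ∘ and ∘_N are compatible in the sense that (X ∘_N Y) ∘ Z − X ∘_N (Y ∘ Z) + Y ∘_N (X ∘ Z) + (X ∘ Y) ∘_N Z − X ∘ (Y ∘_N Z) + Y ∘ (X ∘_N Z) = 0 for all X, Y, Z in A. -/
/-- For a Leibniz algebra `(A, ∘)` and a linear map `N : A → A`, the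
contracted product `X ∘_N Y = N X ∘ Y + X ∘ N Y - N (X ∘ Y)` is always compatible
with `∘` in the sense of the displayed identity. -/
theorem leibniz_contracted_compatible {A : Type*} [AddCommGroup A] [Module ℝ A]
    (c : A →ₗ[ℝ] A →ₗ[ℝ] A)
    (hJac : ∀ X Y Z : A, c (c X Y) Z = c X (c Y Z) - c Y (c X Z))
    (N : A →ₗ[ℝ] A)
    (cN : A → A → A)
    (hcN : ∀ X Y : A, cN X Y = c (N X) Y + c X (N Y) - N (c X Y)) :
    ∀ X Y Z : A,
      c (cN X Y) Z - cN X (c Y Z) + cN Y (c X Z)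
        + cN (c X Y) Z - c X (cN Y Z) + c Y (cN X Z) = 0 := by
  intro X Y Z
  simp only [hcN, map_add, map_sub, LinearMap.add_apply, LinearMap.sub_apply, map_sub, hJac]
  abel
end

section
/- Let A be a Leibniz algebra with product ∘, N : A → A a linear map, T_N(X,Y) = N(X) ∘ N(Y) − N(X ∘_N Y) its Nijenhuis torsion, and δT_N the Leibniz coboundary of T_N. Then for all X, Y, Z: (X ∘_N Y) ∘_N Z − X ∘_N (Y ∘_N Z) + Y ∘_N (X ∘_N Z) = (δT_N)(X, Y, Z), where (δT_N)(X,Y,Z) = T_N(X, Y∘Z) − T_N(X∘Y, Z) − T_N(Y, X∘Z) − T_N(X,Y)∘Z + X∘T_N(Y,Z) − Y∘T_N(X,Z). -/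
/-- For a Leibniz algebra `(A, ∘)` and a linear map `N`, the Jacobi
anomaly of the contracted product `∘_N` equals the Leibniz coboundary of the
Nijenhuis torsion `T_N`. -/
theorem leibniz_jacobi_anomaly_eq_coboundary {A : Type*} [AddCommGroup A] [Module ℝ A]
    (c : A →ₗ[ℝ] A →ₗ[ℝ] A)
    (hJac : ∀ X Y Z : A, c (c X Y) Z = c X (c Y Z) - c Y (c X Z))
    (N : A →ₗ[ℝ] A)
    (cN : A → A → A)
    (hcN : ∀ X Y : A, cN X Y = c (N X) Y + c X (N Y) - N (c X Y))
    (T : A → A → A)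
    (hT : ∀ X Y : A, T X Y = c (N X) (N Y) - N (cN X Y))
    (δT : A → A → A → A)
    (hδT : ∀ X Y Z : A, δT X Y Z =
      T X (c Y Z) - T (c X Y) Z - T Y (c X Z)
        - c (T X Y) Z + c X (T Y Z) - c Y (T X Z)) :
    ∀ X Y Z : A,
      cN (cN X Y) Z - cN X (cN Y Z) + cN Y (cN X Z) = δT X Y Z := by
  intro X Y Z
  simp only [hcN, hT, hδT, map_add, map_sub, LinearMap.add_apply, LinearMap.sub_apply,
    hJac]
  abel
end

section
/- Let A be a Leibniz algebra and N : A → A a linear map. The contracted product ∘_N satisfies the Leibniz Jacobi identity if and only if the Nijenhuis torsion T_N is a Leibniz 2-cocycle, i.e. (δT_N)(X,Y,Z) = 0 for all X, Y, Z. -/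
/-- For a Leibniz algebra `(A, ∘)` and linear `N`, the contracted
product `∘_N` satisfies the Leibniz Jacobi identity iff the Nijenhuis torsion
`T_N` is a Leibniz 2-cocycle. -/
theorem leibniz_contracted_is_leibniz_iff_cocycle {A : Type*} [AddCommGroup A] [Module ℝ A]
    (c : A →ₗ[ℝ] A →ₗ[ℝ] A)
    (hJac : ∀ X Y Z : A, c (c X Y) Z = c X (c Y Z) - c Y (c X Z))
    (N : A →ₗ[ℝ] A)
    (cN : A → A → A)
    (hcN : ∀ X Y : A, cN X Y = c (N X) Y + c X (N Y) - N (c X Y))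
    (T : A → A → A)
    (hT : ∀ X Y : A, T X Y = c (N X) (N Y) - N (cN X Y))
    (δT : A → A → A → A)
    (hδT : ∀ X Y Z : A, δT X Y Z =
      T X (c Y Z) - T (c X Y) Z - T Y (c X Z)
        - c (T X Y) Z + c X (T Y Z) - c Y (T X Z)) :
    (∀ X Y Z : A, cN (cN X Y) Z = cN X (cN Y Z) - cN Y (cN X Z))
      ↔ (∀ X Y Z : A, δT X Y Z = 0) := by
  have key : ∀ X Y Z : A, δT X Y Z =
      cN (cN X Y) Z - (cN X (cN Y Z) - cN Y (cN X Z)) := by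
    intro X Y Z
    simp only [hδT, hT, hcN, map_add, map_sub, LinearMap.add_apply, LinearMap.sub_apply]
    simp only [hJac, map_add, map_sub, LinearMap.add_apply, LinearMap.sub_apply]
    abel
  constructor
  · intro h X Y Z
    rw [key, h, sub_self]
  · intro h X Y Z
    have := key X Y Z
    rw [h] at this
    exact sub_eq_zero.mp this.symm
end

section
/- Let A be a Leibniz algebra and N : A → A a linear map whose Nijenhuis torsion T_N vanishes. Then for every real λ, the bilinear operation X ∘_N Y + λ (X ∘ Y) satisfies the Leibniz Jacobi identity. -/
/-- If the Nijenhuis torsion of a linear map `N` on a Leibniz algebra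
`(A, ∘)` vanishes, then for every `λ ∈ ℝ` the operation `X ∘_N Y + λ (X ∘ Y)`
satisfies the Leibniz Jacobi identity. -/
theorem leibniz_nijenhuis_pencil {A : Type*} [AddCommGroup A] [Module ℝ A]
    (c : A →ₗ[ℝ] A →ₗ[ℝ] A)
    (hJac : ∀ X Y Z : A, c (c X Y) Z = c X (c Y Z) - c Y (c X Z))
    (N : A →ₗ[ℝ] A)
    (cN : A → A → A)
    (hcN : ∀ X Y : A, cN X Y = c (N X) Y + c X (N Y) - N (c X Y))
    (hTzero : ∀ X Y : A, c (N X) (N Y) - N (cN X Y) = 0)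
    (l : ℝ) (b : A → A → A)
    (hb : ∀ X Y : A, b X Y = cN X Y + l • c X Y) :
    ∀ X Y Z : A, b (b X Y) Z = b X (b Y Z) - b Y (b X Z) := by
  have hT : ∀ U V : A, c (N U) (N V) =
      N (c (N U) V) + N (c U (N V)) - N (N (c U V)) := by
    intro U V
    have h := sub_eq_zero.mp (hTzero U V)
    rw [hcN, map_sub, map_add] at h
    exact h
  have hN : ∀ U V : A, N (N (c U V)) =
      N (c (N U) V) + N (c U (N V)) - c (N U) (N V) := by
    intro U V
    rw [hT U V]; abel
  intro X Y Z
  simp only [hb, hcN, map_add, map_sub, map_smul, LinearMap.add_apply,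
    LinearMap.sub_apply, LinearMap.smul_apply, hN, hJac, smul_sub, smul_add]
  rw [hT (c X Y) Z]
  simp only [map_add, map_sub, map_smul, LinearMap.add_apply,
    LinearMap.sub_apply, LinearMap.smul_apply, hJac, hN]
  abel
end

section
/- Let (A, ∘, ρ, ⟨·,·⟩) be a Courant algebroid and N a (1,1)-tensor on A with adjoint N* defined by ⟨NX, Y⟩ = ⟨X, N*Y⟩, and set Δ = N + N*. The contracted product ∘_N satisfies the invariance identity ρ(NX)⟨Y,Z⟩ = ⟨X ∘_N Y, Z⟩ + ⟨Y, X ∘_N Z⟩ for all sections X, Y, Z if and only if Δ commutes with left multiplication: X ∘ ΔZ = Δ(X ∘ Z) for all X, Z. -/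
/-- In a Courant algebroid with a `(1,1)`-tensor `N` whose adjoint is
`Nstar` (`⟨NX,Y⟩ = ⟨X, Nstar Y⟩`), setting `Δ = N + Nstar`, the contracted product
`∘_N` satisfies the invariance identity
`ρ(NX)⟨Y,Z⟩ = ⟨X ∘_N Y, Z⟩ + ⟨Y, X ∘_N Z⟩` for all sections iff `Δ` commutes with
left multiplication: `X ∘ ΔZ = Δ(X ∘ Z)`. -/
theorem courant_contracted_invariance_iff {A F : Type*} [AddCommGroup A] [Module ℝ A]
    [AddCommGroup F] [Module ℝ F]
    (B : A →ₗ[ℝ] A →ₗ[ℝ] F) (hsym : ∀ a b : A, B a b = B b a)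
    (hnd : ∀ v : A, (∀ w : A, B w v = 0) → v = 0)
    (c : A →ₗ[ℝ] A →ₗ[ℝ] A)
    (hJac : ∀ X Y Z : A, c (c X Y) Z = c X (c Y Z) - c Y (c X Z))
    (ρ : A → F →ₗ[ℝ] F)
    (h6 : ∀ X Y Z : A, ρ X (B Y Z) = B (c X Y) Z + B Y (c X Z))
    (h4a : ∀ X Y Z : A, ρ X (B Y Z) = B X (c Y Z + c Z Y))
    (N Nstar : A →ₗ[ℝ] A)
    (hadj : ∀ a b : A, B (N a) b = B a (Nstar b))
    (cN : A → A → A)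
    (hcN : ∀ X Y : A, cN X Y = c (N X) Y + c X (N Y) - N (c X Y)) :
    (∀ X Y Z : A, ρ (N X) (B Y Z) = B (cN X Y) Z + B Y (cN X Z))
      ↔ (∀ X Z : A, c X ((N + Nstar) Z) = (N + Nstar) (c X Z)) := by
  have key : ∀ X Y Z : A, B (cN X Y) Z + B Y (cN X Z)
      = ρ (N X) (B Y Z) + B Y (c X ((N + Nstar) Z) - (N + Nstar) (c X Z)) := by
    intro X Y Z
    have e1 := h6 (N X) Y Z
    have e2 := h6 X (N Y) Z
    have e3 := h6 X Y (Nstar Z)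
    have h2' : B (c X (N Y)) Z = ρ X (B (N Y) Z) - B (N Y) (c X Z) := by
      rw [e2]; abel
    have h3' : B (c X Y) (Nstar Z) = ρ X (B Y (Nstar Z)) - B Y (c X (Nstar Z)) := by
      rw [e3]; abel
    rw [hcN, hcN]
    simp only [map_add, map_sub, LinearMap.add_apply, LinearMap.sub_apply]
    rw [h2', hadj Y Z, hadj Y (c X Z), hadj (c X Y) Z, h3', e1]
    abel
  constructor
  · intro h X Z
    have hz : c X ((N + Nstar) Z) - (N + Nstar) (c X Z) = 0 := by
      apply hnd
      intro Y
      have k := key X Y Z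
      rw [← h X Y Z] at k
      have : ρ (N X) (B Y Z) + B Y (c X ((N + Nstar) Z) - (N + Nstar) (c X Z))
          - ρ (N X) (B Y Z) = 0 := by rw [← k]; abel
      simpa using this
    exact sub_eq_zero.mp hz
  · intro h X Y Z
    rw [key X Y Z, h X Z, sub_self, map_zero, add_zero]
end

section
/- Let (A, ∘, ρ, ⟨·,·⟩) be a Courant algebroid and N a (1,1)-tensor with Δ = N + N* commuting with left multiplication (X ∘ ΔZ = Δ(X∘Z)). Then the identity ρ(NX)⟨Y,Y⟩ = 2⟨X, Y ∘_N Y⟩ holds for all X, Y if and only if Δ(Y ∘ Y) = ΔY ∘ Y for all Y. -/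
/-- In a Courant algebroid with a `(1,1)`-tensor `N`, adjoint
`Nstar`, and `Δ = N + Nstar` commuting with left multiplication, the identity
`ρ(NX)⟨Y,Y⟩ = 2⟨X, Y ∘_N Y⟩` holds for all `X, Y` iff `Δ(Y∘Y) = ΔY ∘ Y` for all `Y`. -/
theorem courant_contracted_square_axiom_iff {A F : Type*} [AddCommGroup A] [Module ℝ A]
    [AddCommGroup F] [Module ℝ F]
    (B : A →ₗ[ℝ] A →ₗ[ℝ] F) (hsym : ∀ a b : A, B a b = B b a)
    (hnd : ∀ v : A, (∀ w : A, B w v = 0) → v = 0)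
    (c : A →ₗ[ℝ] A →ₗ[ℝ] A)
    (hJac : ∀ X Y Z : A, c (c X Y) Z = c X (c Y Z) - c Y (c X Z))
    (ρ : A → F →ₗ[ℝ] F)
    (h6 : ∀ X Y Z : A, ρ X (B Y Z) = B (c X Y) Z + B Y (c X Z))
    (h4a : ∀ X Y Z : A, ρ X (B Y Z) = B X (c Y Z + c Z Y))
    (N Nstar : A →ₗ[ℝ] A)
    (hadj : ∀ a b : A, B (N a) b = B a (Nstar b))
    (hcomm : ∀ X Z : A, c X ((N + Nstar) Z) = (N + Nstar) (c X Z))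
    (cN : A → A → A)
    (hcN : ∀ X Y : A, cN X Y = c (N X) Y + c X (N Y) - N (c X Y)) :
    (∀ X Y : A, ρ (N X) (B Y Y) = (2 : ℝ) • B X (cN Y Y))
      ↔ (∀ Y : A, (N + Nstar) (c Y Y) = c ((N + Nstar) Y) Y) := by
  -- nondegeneracy in "separating" form
  have hnd' : ∀ u v : A, (∀ w : A, B w u = B w v) → u = v := by
    intro u v h
    have h0 : ∀ w : A, B w (u - v) = 0 := fun w => by simp [h w]
    have := hnd (u - v) h0
    exact sub_eq_zero.mp this
  -- symmetrization lemma S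
  have hS : ∀ Y : A, c (N Y) Y + c Y (N Y) = c (Nstar Y) Y + c Y (Nstar Y) := by
    intro Y
    apply hnd'
    intro X
    have h1 := h4a X (N Y) Y
    have h2 := h4a X (Nstar Y) Y
    have hb : B (N Y) Y = B (Nstar Y) Y := by
      rw [hadj, hsym]
    rw [← h1, ← h2, hb]
  -- `hcomm` applied on the diagonal
  have hcd : ∀ Y : A, (N + Nstar) (c Y Y) = c Y (N Y) + c Y (Nstar Y) := by
    intro Y
    have h := (hcomm Y Y).symm
    simpa [LinearMap.add_apply, map_add] using h
  -- the key intermediate statement L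
  have keyL : (∀ X Y : A, ρ (N X) (B Y Y) = (2 : ℝ) • B X (cN Y Y)) ↔
      (∀ Y : A, (N + Nstar) (c Y Y) = c (N Y) Y + c Y (N Y)) := by
    constructor
    · intro H Y
      apply hnd'
      intro X
      have h1 : ρ (N X) (B Y Y) = (2 : ℝ) • B X (Nstar (c Y Y)) := by
        rw [h4a (N X) Y Y]
        rw [two_smul]
        rw [map_add, hadj, ← map_add]
      have h2 := H X Y
      rw [h1, hcN] at h2
      have h3 : B X (Nstar (c Y Y)) = B X (c (N Y) Y + c Y (N Y) - N (c Y Y)) := by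
        have h2' : (2 : ℝ) • (B X (Nstar (c Y Y)) - B X (c (N Y) Y + c Y (N Y) - N (c Y Y))) = 0 := by
          rw [smul_sub, h2, sub_self]
        have := smul_eq_zero.mp h2'
        rcases this with h | h
        · norm_num at h
        · exact sub_eq_zero.mp h
      simp only [LinearMap.add_apply, map_add, map_sub] at h3 ⊢
      rw [h3]; abel
    · intro H X Y
      rw [h4a (N X) Y Y, hcN]
      have hL : c (N Y) Y + c Y (N Y) - N (c Y Y) = Nstar (c Y Y) := by
        have := H Y
        simp only [LinearMap.add_apply] at this
        linear_combination (norm := abel) this.symm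
      rw [hL, two_smul, map_add, hadj, ← map_add]
  rw [keyL]
  -- now show L ↔ R pointwise
  constructor
  · intro H Y
    -- from L: c Y (Nstar Y) = c (N Y) Y
    have hL := H Y
    rw [hcd Y] at hL
    have e1 : c Y (Nstar Y) = c (N Y) Y := by
      linear_combination (norm := abel) hL
    have e2 : c Y (N Y) = c (Nstar Y) Y := by
      linear_combination (norm := abel) (hS Y) + e1
    rw [hcd Y]
    simp only [LinearMap.add_apply, map_add]
    linear_combination (norm := abel) e1 + e2
  · intro H Y
    have hR := H Y
    rw [hcd Y] at hR
    simp only [LinearMap.add_apply, map_add] at hR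
    -- u := c Y (Nstar Y) - c (N Y) Y satisfies u = -u
    have hu : (2 : ℝ) • (c Y (Nstar Y) - c (N Y) Y) = 0 := by
      rw [two_smul]
      linear_combination (norm := abel) hR - (hS Y)
    have hu0 : c Y (Nstar Y) - c (N Y) Y = 0 := by
      rcases smul_eq_zero.mp hu with h | h
      · norm_num at h
      · exact h
    have e1 : c Y (Nstar Y) = c (N Y) Y := sub_eq_zero.mp hu0
    rw [hcd Y]
    linear_combination (norm := abel) e1
end

section
/- Let N be a (1,1)-tensor on a Courant algebroid with N + N* = 0 whose Nijenhuis torsion vanishes (T_N(X,Y) = NX ∘ NY − N(X ∘_N Y) = 0 for all X, Y). Then N² commutes with left multiplication: X ∘ N²Y = N²(X ∘ Y) for all sections X, Y. -/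
/-- If `N` is a `(1,1)`-tensor on a Courant algebroid with
`N + N* = 0` and vanishing Nijenhuis torsion, then `N²` commutes with left
multiplication: `X ∘ N²Y = N²(X ∘ Y)`. -/
theorem courant_nijenhuis_square_commutes {A F : Type*} [AddCommGroup A] [Module ℝ A]
    [AddCommGroup F] [Module ℝ F]
    (B : A →ₗ[ℝ] A →ₗ[ℝ] F) (hsym : ∀ a b : A, B a b = B b a)
    (hnd : ∀ v : A, (∀ w : A, B w v = 0) → v = 0)
    (c : A →ₗ[ℝ] A →ₗ[ℝ] A)
    (hJac : ∀ X Y Z : A, c (c X Y) Z = c X (c Y Z) - c Y (c X Z))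
    (ρ : A → F →ₗ[ℝ] F)
    (h6 : ∀ X Y Z : A, ρ X (B Y Z) = B (c X Y) Z + B Y (c X Z))
    (h4a : ∀ X Y Z : A, ρ X (B Y Z) = B X (c Y Z + c Z Y))
    (N : A →ₗ[ℝ] A)
    (hskewadj : ∀ a b : A, B (N a) b = - B a (N b))
    (cN : A → A → A)
    (hcN : ∀ X Y : A, cN X Y = c (N X) Y + c X (N Y) - N (c X Y))
    (hT : ∀ X Y : A, c (N X) (N Y) - N (cN X Y) = 0) :
    ∀ X Y : A, c X (N (N Y)) = N (N (c X Y)) := by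
  intro X Y
  have skew2 : ∀ a b : A, B (N (N a)) b = B a (N (N b)) := by
    intro a b; rw [hskewadj, hskewadj, neg_neg]
  have key : ∀ U V Z : A, B (c U V) Z = B U (c V Z + c Z V) - B V (c U Z) := by
    intro U V Z
    have h2 := h4a U V Z
    rw [h6 U V Z] at h2
    exact eq_sub_of_add_eq h2
  have Srel : ∀ Z U W : A, B Z (c (N U) W + c W (N U)) = - B Z (c U (N W) + c (N W) U) := by
    intro Z U W
    have a1 := h4a Z (N U) W
    rw [hskewadj, map_neg, h4a Z U (N W)] at a1
    exact a1.symm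
  have t1 : ∀ U V : A, c (N U) (N V) = N (c (N U) V) + N (c U (N V)) - N (N (c U V)) := by
    intro U V
    have h := hT U V
    rw [hcN] at h
    have h' := sub_eq_zero.mp h
    rw [h', map_sub, map_add]
  have hz : ∀ Z : A, B Z (c X (N (N Y)) - N (N (c X Y))) = 0 := by
    intro Z
    have t0 := congrArg (fun a => B a Y) (t1 X Z)
    simp only [map_add, map_sub, LinearMap.add_apply, LinearMap.sub_apply] at t0
    have s1 := hskewadj (c (N X) Z) Y
    have s2 := hskewadj (c X (N Z)) Y
    have s3 := skew2 (c X Z) Y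
    have k1 := key (N X) (N Z) Y
    have k2 := key (N X) Z (N Y)
    have k3 := key X (N Z) (N Y)
    have k4 := key X Z (N (N Y))
    have r1 := Srel (N X) Z Y
    have r2 := Srel X Z (N Y)
    have tb := congrArg (fun a => B Z a) (t1 X Y)
    simp only [map_add, map_sub] at tb
    have q1 := hskewadj Z (c (N X) Y)
    have q2 := hskewadj Z (c X (N Y))
    have goal' : B Z (c X (N (N Y))) = B Z (N (N (c X Y))) := by
      linear_combination (norm := module) k1 - t0 - s1 - s2 + s3 + k2 + k3 + k4 + r1 + r2 - tb - q1 - q2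
    rw [map_sub, goal', sub_self]
  exact sub_eq_zero.mp (hnd _ hz)
end

section
/- Let N be a (1,1)-tensor on a Courant algebroid with N + N* = 0 and vanishing Nijenhuis torsion. Then N²(Y ∘ Y) = (N²Y) ∘ Y for all sections Y. -/
/-- If `N` is a `(1,1)`-tensor on a Courant algebroid with
`N + N* = 0` and vanishing Nijenhuis torsion, then `N²(Y ∘ Y) = (N²Y) ∘ Y`. -/
theorem courant_nijenhuis_square_on_squares {A F : Type*} [AddCommGroup A] [Module ℝ A]
    [AddCommGroup F] [Module ℝ F]
    (B : A →ₗ[ℝ] A →ₗ[ℝ] F) (hsym : ∀ a b : A, B a b = B b a)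
    (hnd : ∀ v : A, (∀ w : A, B w v = 0) → v = 0)
    (c : A →ₗ[ℝ] A →ₗ[ℝ] A)
    (hJac : ∀ X Y Z : A, c (c X Y) Z = c X (c Y Z) - c Y (c X Z))
    (ρ : A → F →ₗ[ℝ] F)
    (h6 : ∀ X Y Z : A, ρ X (B Y Z) = B (c X Y) Z + B Y (c X Z))
    (h4a : ∀ X Y Z : A, ρ X (B Y Z) = B X (c Y Z + c Z Y))
    (N : A →ₗ[ℝ] A)
    (hskewadj : ∀ a b : A, B (N a) b = - B a (N b))
    (cN : A → A → A)
    (hcN : ∀ X Y : A, cN X Y = c (N X) Y + c X (N Y) - N (c X Y))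
    (hT : ∀ X Y : A, c (N X) (N Y) - N (cN X Y) = 0) :
    ∀ Y : A, N (N (c Y Y)) = c (N (N Y)) Y := by
  intro Y
  -- skew-adjointness applied twice
  have skew2 : ∀ x z : A, B (N (N x)) z = B x (N (N z)) := fun x z => by
    rw [hskewadj (N x) z, hskewadj x (N z), neg_neg]
  -- Step A: the symmetrized product satisfies S(Nu,v) + S(u,Nv) = 0
  have hA : ∀ u v : A, c (N u) v + c v (N u) + (c u (N v) + c (N v) u) = 0 := by
    intro u v
    apply hnd
    intro w
    rw [map_add, ← h4a w (N u) v, ← h4a w u (N v), ← map_add, hskewadj u v,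
      neg_add_cancel, map_zero]
  -- Step B: NY∘Y + Y∘NY = 0
  have hB : c (N Y) Y + c Y (N Y) = 0 := by
    have h := hA Y Y
    have h2 : (2:ℝ) • (c (N Y) Y + c Y (N Y)) = 0 := by
      linear_combination (norm := module) h
    calc c (N Y) Y + c Y (N Y)
        = (2:ℝ)⁻¹ • ((2:ℝ) • (c (N Y) Y + c Y (N Y))) :=
          (inv_smul_smul₀ two_ne_zero _).symm
      _ = 0 := by rw [h2, smul_zero]
  have s1 : ∀ x : A, B Y (N x) = - B (N Y) x := fun x => by
    rw [hsym Y (N x), hskewadj x Y, hsym x (N Y)]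
  -- Step E: NY∘NY + Y∘N²Y = 0
  have hE : c (N Y) (N Y) + c Y (N (N Y)) = 0 := by
    apply hnd
    intro w
    rw [map_add, hsym w (c (N Y) (N Y)), hsym w (c Y (N (N Y)))]
    have E0 : c (N Y) (N w) = N (c (N Y) w) + N (c Y (N w)) - N (N (c Y w)) := by
      have h := hT Y w
      rw [hcN Y w, map_sub, map_add] at h
      linear_combination (norm := module) h
    have e1 : B Y (c (N Y) (N w))
        = B Y (N (c (N Y) w)) + B Y (N (c Y (N w))) - B Y (N (N (c Y w))) := by
      rw [E0, map_sub, map_add]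
    have e2 : B Y (N (c (N Y) w)) = - B (N Y) (c (N Y) w) := s1 _
    have e3 : B Y (N (c Y (N w))) = - B (N Y) (c Y (N w)) := s1 _
    have e4 := h6 (N Y) (N Y) w
    have e5 := h6 Y (N Y) (N w)
    have e6 := h6 (N Y) Y (N w)
    have e7 : B (N Y) (N w) = - B (N (N Y)) w := by
      rw [hskewadj Y (N w), skew2 Y w]
    have e7' : ρ Y (B (N Y) (N w)) = - ρ Y (B (N (N Y)) w) := by rw [e7, map_neg]
    have e8' : ρ (N Y) (B Y (N w)) = - ρ (N Y) (B (N Y) w) := by rw [s1 w, map_neg]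
    have e9 : B (c Y (N Y)) (N w) + B (c (N Y) Y) (N w) = 0 := by
      rw [← LinearMap.add_apply, ← map_add,
        show c Y (N Y) + c (N Y) Y = (0:A) from by rw [add_comm]; exact hB,
        map_zero, LinearMap.zero_apply]
    have hyp2 := h6 Y (N (N Y)) w
    have hyp3 : B (N (N Y)) (c Y w) = B Y (N (N (c Y w))) := skew2 Y (c Y w)
    linear_combination (norm := module)
      -e1 - e2 - e3 - e4 - e5 - e6 + e7' + e8' - e9 - hyp2 - hyp3
  -- Step F
  have hF := hA (N Y) Y
  -- Step G: N²(Y∘Y) = −NY∘NY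
  have hG : N (N (c Y Y)) + c (N Y) (N Y) = 0 := by
    have h := hT Y Y
    rw [hcN Y Y, map_sub, map_add] at h
    have h0 : N (c (N Y) Y) + N (c Y (N Y)) = 0 := by
      rw [← map_add, hB, map_zero]
    linear_combination (norm := module) h + h0
  linear_combination (norm := module) hG - hF + hE
end

section
/- Let (L, N) be a Dirac-Nijenhuis structure in a Courant algebroid, i.e. L is a Dirac subbundle, sections of L are closed under ∘_N, ∘_N is skew-symmetric on L, and the Nijenhuis torsion T_N vanishes on sections of L. Then for all sections X, Y of L: N(X ∘_N Y) = NX ∘ NY, and ∘_N satisfies the Jacobi identity on L. -/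
/-- For a Dirac-Nijenhuis structure `(L, N)` in a Courant algebroid
(`L` a Dirac subbundle, sections of `L` closed under `∘_N`, `∘_N` skew-symmetric
on `L`, and the Nijenhuis torsion vanishing on `L`), one has
`N(X ∘_N Y) = NX ∘ NY` on `L` and `∘_N` satisfies the Jacobi identity on `L`. -/
theorem dirac_nijenhuis_properties {A F : Type*} [AddCommGroup A] [Module ℝ A]
    [AddCommGroup F] [Module ℝ F]
    (B : A →ₗ[ℝ] A →ₗ[ℝ] F) (hsym : ∀ a b : A, B a b = B b a)
    (hnd : ∀ v : A, (∀ w : A, B w v = 0) → v = 0)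
    (c : A →ₗ[ℝ] A →ₗ[ℝ] A)
    (hJac : ∀ X Y Z : A, c (c X Y) Z = c X (c Y Z) - c Y (c X Z))
    (ρ : A → F →ₗ[ℝ] F)
    (h6 : ∀ X Y Z : A, ρ X (B Y Z) = B (c X Y) Z + B Y (c X Z))
    (h4a : ∀ X Y Z : A, ρ X (B Y Z) = B X (c Y Z + c Z Y))
    (N : A →ₗ[ℝ] A)
    (cN : A → A → A)
    (hcN : ∀ X Y : A, cN X Y = c (N X) Y + c X (N Y) - N (c X Y))
    (L : Submodule ℝ A)
    -- `L` is a Dirac subbundle: maximal isotropic and closed under `∘`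
    (hiso : ∀ u ∈ L, ∀ v ∈ L, B u v = 0)
    (hmax : ∀ v : A, (∀ w ∈ L, B v w = 0) → v ∈ L)
    (hclosed : ∀ u ∈ L, ∀ v ∈ L, c u v ∈ L)
    -- `(L, N)` is Dirac-Nijenhuis
    (hclosedN : ∀ u ∈ L, ∀ v ∈ L, cN u v ∈ L)
    (hskewN : ∀ u ∈ L, ∀ v ∈ L, cN u v = - cN v u)
    (hTL : ∀ u ∈ L, ∀ v ∈ L, c (N u) (N v) - N (cN u v) = 0) :
    (∀ X ∈ L, ∀ Y ∈ L, N (cN X Y) = c (N X) (N Y)) ∧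
      (∀ X ∈ L, ∀ Y ∈ L, ∀ Z ∈ L,
        cN (cN X Y) Z = cN X (cN Y Z) - cN Y (cN X Z)) := by
  have hN : ∀ u ∈ L, ∀ v ∈ L, N (cN u v) = c (N u) (N v) := by
    intro u hu v hv
    have h := hTL u hu v hv
    have := sub_eq_zero.mp h
    exact this.symm
  refine ⟨hN, ?_⟩
  intro X hX Y hY Z hZ
  have e1 : N (cN X Y) = c (N X) (N Y) := hN X hX Y hY
  have e2 : N (cN Y Z) = c (N Y) (N Z) := hN Y hY Z hZ
  have e3 : N (cN X Z) = c (N X) (N Z) := hN X hX Z hZ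
  -- Nijenhuis torsion instances
  have t3 : c (N (c X Y)) (N Z) - N (cN (c X Y) Z) = 0 :=
    hTL (c X Y) (hclosed X hX Y hY) Z hZ
  have tXYZ : c (N X) (N (c Y Z)) - N (cN X (c Y Z)) = 0 :=
    hTL X hX (c Y Z) (hclosed Y hY Z hZ)
  have tYXZ : c (N Y) (N (c X Z)) - N (cN Y (c X Z)) = 0 :=
    hTL Y hY (c X Z) (hclosed X hX Z hZ)
  rw [hcN (c X Y) Z] at t3
  rw [hcN X (c Y Z)] at tXYZ
  rw [hcN Y (c X Z)] at tYXZ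
  -- N-applied Jacobi instances
  have njXYN := congrArg N (hJac X Y (N Z))
  have njNYZ := congrArg N (hJac (N X) Y Z)
  have njXNZ := congrArg N (hJac X (N Y) Z)
  have nnjXYZ := congrArg N (congrArg N (hJac X Y Z))
  simp only [map_sub, map_add] at njXYN njNYZ njXNZ nnjXYZ t3 tXYZ tYXZ
  rw [hcN (cN X Y) Z, e1, hcN X (cN Y Z), e2, hcN Y (cN X Z), e3,
    hcN X Y, hcN Y Z, hcN X Z]
  simp only [map_sub, map_add, LinearMap.sub_apply, LinearMap.add_apply]
  linear_combination (norm := module)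
    hJac (N X) (N Y) Z + hJac (N X) Y (N Z) + hJac X (N Y) (N Z)
    - njXYN - njNYZ - njXNZ + nnjXYZ - t3 + tXYZ - tYXZ
end

section
/- Let Ω be a closed 2-form on M, L ⊂ TM ⊕ T*M the associated Dirac structure with sections X + ΩX, and N(X+ξ) = N₀X for a (1,1)-tensor N₀ on TM. Then L is closed under the contracted Courant product ∘_N if and only if Ω N₀ is skew-symmetric and the 2-form Ω N₀ is closed (d(ΩN₀) = 0); in that case (X + ΩX) ∘_N (Y + ΩY) = [X,Y]_{N₀} + Ω[X,Y]_{N₀}. -/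
/-!
Evaluating the closedness of `Ω` at `(N₀ X, Y)` and `(X, N₀ Y)` shows that the 1-form part of
`(X + ΩX) ∘_N (Y + ΩY)` is `Ω [X, Y]_{N₀} − d(ΩN₀)(X, Y, ·)`, so the graph of `Ω` is closed
under `∘_N` exactly when `d(ΩN₀) = 0`. Skew-symmetry of `B = ΩN₀` is then automatic: `d B` fails
to be tensorial in its first slot by `Z f · (B(X, Y) + B(Y, X))`, so `d B = 0` forces `s • X = 0`
for `s = B(X, Y) + B(Y, X)`, whence `s² = s · B(X, Y) + s · B(Y, X) = 0`, and `s = 0` because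
smooth functions have no nilpotents.
-/

set_option linter.unusedSectionVars false

open Manifold
local notation "∞" => (⊤ : ℕ∞)

variable {EE : Type*} [NormedAddCommGroup EE] [NormedSpace ℝ EE] [FiniteDimensional ℝ EE]
  {M : Type*} [TopologicalSpace M] [ChartedSpace EE M]
  {I : ModelWithCorners ℝ EE EE} [IsManifold I ∞ M]

local notation "𝓕" => C^∞⟮I, M; ℝ⟯
local notation "𝓥" => Derivation ℝ C^∞⟮I, M; ℝ⟯ C^∞⟮I, M; ℝ⟯
local notation "Ω¹" =>
  (Derivation ℝ C^∞⟮I, M; ℝ⟯ C^∞⟮I, M; ℝ⟯ →ₗ[C^∞⟮I, M; ℝ⟯] C^∞⟮I, M; ℝ⟯)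

theorem bracket_smul (X Y : 𝓥) (f : 𝓕) :
    ⁅X, f • Y⁆ = f • ⁅X, Y⁆ + X f • Y := by
  ext g
  simp only [Derivation.commutator_apply, Derivation.smul_apply, Derivation.add_apply,
    smul_eq_mul, Derivation.leibniz]
  ring

theorem bracket_add_right (X Y Z : 𝓥) : ⁅X, Y + Z⁆ = ⁅X, Y⁆ + ⁅X, Z⁆ := by
  ext g
  simp only [Derivation.commutator_apply, Derivation.add_apply, map_add]
  ring

/-- The Lie derivative of a 1-form along a vector field. -/
noncomputable def lieD (X : 𝓥) (η : Ω¹) : Ω¹ where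
  toFun Y := X (η Y) - η ⁅X, Y⁆
  map_add' Y Z := by simp only [map_add, bracket_add_right, Derivation.add_apply]; abel
  map_smul' f Y := by
    simp only [map_smul, smul_eq_mul, Derivation.leibniz, bracket_smul, map_add,
      RingHom.id_apply]
    ring

/-- The contraction `i_Y dξ` of the de Rham differential of a 1-form `ξ`. -/
noncomputable def iotaD (Y : 𝓥) (ξ : Ω¹) : Ω¹ where
  toFun Z := Y (ξ Z) - Z (ξ Y) - ξ ⁅Y, Z⁆
  map_add' Z W := by simp only [map_add, bracket_add_right, Derivation.add_apply]; abel
  map_smul' f Z := by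
    simp only [map_smul, smul_eq_mul, Derivation.leibniz, bracket_smul, map_add,
      Derivation.smul_apply, RingHom.id_apply]
    ring

/-- The (Leibniz-version) Courant bracket on `TM ⊕ T*M`. -/
noncomputable def courant (u v : 𝓥 × Ω¹) : 𝓥 × Ω¹ :=
  (⁅u.1, v.1⁆, lieD u.1 v.2 - iotaD v.1 u.2)


/-- The endomorphism `N(X+ξ) = N₀X` of `TM ⊕ T*M`. -/
noncomputable def liftTop (N₀ : Derivation ℝ C^∞⟮I, M; ℝ⟯ C^∞⟮I, M; ℝ⟯
      →ₗ[C^∞⟮I, M; ℝ⟯] Derivation ℝ C^∞⟮I, M; ℝ⟯ C^∞⟮I, M; ℝ⟯)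
    (u : 𝓥 × Ω¹) : 𝓥 × Ω¹ :=
  (N₀ u.1, 0)

/-- The contracted product `u ∘_N v = Nu∘v + u∘Nv − N(u∘v)`. -/
noncomputable def contractedCourant (N : 𝓥 × Ω¹ → 𝓥 × Ω¹) (u v : 𝓥 × Ω¹) : 𝓥 × Ω¹ :=
  courant (N u) v + courant u (N v) - N (courant u v)

/-- The deformed bracket `[X,Y]_{N₀} = [N₀X,Y] + [X,N₀Y] − N₀[X,Y]`. -/
noncomputable def nbracket (N₀ : Derivation ℝ C^∞⟮I, M; ℝ⟯ C^∞⟮I, M; ℝ⟯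
      →ₗ[C^∞⟮I, M; ℝ⟯] Derivation ℝ C^∞⟮I, M; ℝ⟯ C^∞⟮I, M; ℝ⟯)
    (X Y : 𝓥) : 𝓥 :=
  ⁅N₀ X, Y⁆ + ⁅X, N₀ Y⁆ - N₀ ⁅X, Y⁆

namespace ContMDiffMap

variable {𝕜 : Type*} [NontriviallyNormedField 𝕜] {E : Type*} [NormedAddCommGroup E]
  [NormedSpace 𝕜 E] {H : Type*} [TopologicalSpace H] {J : ModelWithCorners 𝕜 E H}
  {N : Type*} [TopologicalSpace N] [ChartedSpace H N]
  {E' : Type*} [NormedAddCommGroup E'] [NormedSpace 𝕜 E'] {H' : Type*} [TopologicalSpace H']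
  {J' : ModelWithCorners 𝕜 E' H'} {n : WithTop ℕ∞}

instance isReduced {R : Type*} [CommRing R] [IsReduced R] [TopologicalSpace R]
    [ChartedSpace H' R] [ContMDiffRing J' n R] : IsReduced C^n⟮J, N; J', R⟯ :=
  isReduced_of_injective coeFnRingHom DFunLike.coe_injective

end ContMDiffMap

noncomputable def dBilin (B : 𝓥 →ₗ[𝓕] Ω¹) (X Y : 𝓥) : Ω¹ :=
  lieD X (B Y) - iotaD Y (B X) - B ⁅X, Y⁆

@[simp]
theorem lieD_apply (X : 𝓥) (η : Ω¹) (Y : 𝓥) : lieD X η Y = X (η Y) - η ⁅X, Y⁆ := rfl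

@[simp]
theorem iotaD_apply (Y : 𝓥) (ξ : Ω¹) (Z : 𝓥) :
    iotaD Y ξ Z = Y (ξ Z) - Z (ξ Y) - ξ ⁅Y, Z⁆ := rfl

@[simp]
theorem lieD_zero (X : 𝓥) : lieD X (0 : Ω¹) = 0 := by
  ext; simp

@[simp]
theorem iotaD_zero (Y : 𝓥) : iotaD Y (0 : Ω¹) = 0 := by
  ext; simp

theorem bracket_smul_left (X Y : 𝓥) (f : 𝓕) : ⁅f • X, Y⁆ = f • ⁅X, Y⁆ - Y f • X := by
  ext g
  simp only [Derivation.commutator_apply, Derivation.smul_apply, Derivation.sub_apply,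
    smul_eq_mul, Derivation.leibniz]
  ring

theorem contractedCourant_liftTop (N₀ : 𝓥 →ₗ[𝓕] 𝓥) (X Y : 𝓥) (ξ η : Ω¹) :
    contractedCourant (liftTop N₀) (X, ξ) (Y, η)
      = (nbracket N₀ X Y, lieD (N₀ X) η - iotaD (N₀ Y) ξ) := by
  ext1
  · rfl
  · simp only [contractedCourant, courant, liftTop, Prod.snd_add, Prod.snd_sub, lieD_zero,
      iotaD_zero]
    abel

theorem lieD_sub_iotaD_eq (B : 𝓥 →ₗ[𝓕] Ω¹) (N₀ : 𝓥 →ₗ[𝓕] 𝓥) (X Y : 𝓥) :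
    lieD (N₀ X) (B Y) - iotaD (N₀ Y) (B X)
      = B (nbracket N₀ X Y) + dBilin B (N₀ X) Y + dBilin B X (N₀ Y)
          - dBilin (B ∘ₗ N₀) X Y := by
  simp only [dBilin, nbracket, LinearMap.comp_apply, map_add, map_sub]
  abel

theorem contractedCourant_liftTop_graph {Ω : 𝓥 →ₗ[𝓕] Ω¹} (hΩ : ∀ X Y, dBilin Ω X Y = 0)
    (N₀ : 𝓥 →ₗ[𝓕] 𝓥) (X Y : 𝓥) :
    contractedCourant (liftTop N₀) (X, Ω X) (Y, Ω Y)
      = (nbracket N₀ X Y, Ω (nbracket N₀ X Y) - dBilin (Ω ∘ₗ N₀) X Y) := by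
  rw [contractedCourant_liftTop, lieD_sub_iotaD_eq, hΩ, hΩ, add_zero, add_zero]

theorem dBilin_smul_left_apply (B : 𝓥 →ₗ[𝓕] Ω¹) (f : 𝓕) (X Y Z : 𝓥) :
    dBilin B (f • X) Y Z = f * dBilin B X Y Z + Z f * (B X Y + B Y X) := by
  simp only [dBilin, LinearMap.sub_apply, lieD_apply, iotaD_apply, bracket_smul_left,
    map_smul, map_sub, LinearMap.smul_apply, Derivation.smul_apply, smul_eq_mul,
    Derivation.leibniz]
  ring

theorem skew_of_dBilin_eq_zero {B : 𝓥 →ₗ[𝓕] Ω¹} (hB : ∀ X Y, dBilin B X Y = 0) (X Y : 𝓥) :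
    B X Y = - B Y X := by
  set s := B X Y + B Y X
  have hsX : s • X = 0 := by
    refine Derivation.ext fun f => ?_
    simpa [hB, mul_comm] using (dBilin_smul_left_apply B f X Y X).symm
  have hXY : s * B X Y = 0 := by
    simpa using congrArg (fun W => B W Y) hsX
  have hYX : s * B Y X = 0 := by
    simpa using congrArg (fun W => B Y W) hsX
  have hs : s = 0 := IsReduced.eq_zero s ⟨2, by rw [pow_two]; linear_combination hXY + hYX⟩
  exact eq_neg_of_add_eq_zero_left hs

theorem graph_closed_under_contracted_iff_general
    (Ω : Derivation ℝ C^∞⟮I, M; ℝ⟯ C^∞⟮I, M; ℝ⟯ →ₗ[C^∞⟮I, M; ℝ⟯]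
      (Derivation ℝ C^∞⟮I, M; ℝ⟯ C^∞⟮I, M; ℝ⟯ →ₗ[C^∞⟮I, M; ℝ⟯] C^∞⟮I, M; ℝ⟯))
    (hΩclosed : ∀ X Y : 𝓥, lieD X (Ω Y) - iotaD Y (Ω X) - Ω ⁅X, Y⁆ = 0)
    (N₀ : Derivation ℝ C^∞⟮I, M; ℝ⟯ C^∞⟮I, M; ℝ⟯
      →ₗ[C^∞⟮I, M; ℝ⟯] Derivation ℝ C^∞⟮I, M; ℝ⟯ C^∞⟮I, M; ℝ⟯) :
    ((∀ X Y : 𝓥, ∃ Z : 𝓥,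
        contractedCourant (liftTop N₀) (X, Ω X) (Y, Ω Y) = (Z, Ω Z))
      ↔ ((∀ X Y : 𝓥, Ω (N₀ X) Y = - Ω (N₀ Y) X)
          ∧ (∀ X Y : 𝓥,
              lieD X (Ω (N₀ Y)) - iotaD Y (Ω (N₀ X)) - Ω (N₀ ⁅X, Y⁆) = 0)))
    ∧ (((∀ X Y : 𝓥, Ω (N₀ X) Y = - Ω (N₀ Y) X)
          ∧ (∀ X Y : 𝓥,
              lieD X (Ω (N₀ Y)) - iotaD Y (Ω (N₀ X)) - Ω (N₀ ⁅X, Y⁆) = 0)) →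
        ∀ X Y : 𝓥,
          contractedCourant (liftTop N₀) (X, Ω X) (Y, Ω Y)
            = (nbracket N₀ X Y, Ω (nbracket N₀ X Y))) := by
  have hL := contractedCourant_liftTop_graph hΩclosed N₀
  have closed_iff : (∀ X Y : 𝓥, ∃ Z : 𝓥,
      contractedCourant (liftTop N₀) (X, Ω X) (Y, Ω Y) = (Z, Ω Z))
        ↔ ∀ X Y, dBilin (Ω ∘ₗ N₀) X Y = 0 := by
    refine forall₂_congr fun X Y => ?_
    simp only [hL, Prod.mk.injEq, exists_eq_left', sub_eq_self]
  refine ⟨closed_iff.trans ⟨fun hD => ⟨skew_of_dBilin_eq_zero hD, hD⟩, And.right⟩, ?_⟩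
  rintro ⟨-, hD⟩ X Y
  rw [hL, show dBilin (Ω ∘ₗ N₀) X Y = 0 from hD X Y, sub_zero]

/-- for the Dirac structure `L = {X + ΩX}` of a closed 2-form `Ω`
and `N(X+ξ) = N₀X`, the subbundle `L` is closed under `∘_N` iff `ΩN₀` is
skew-symmetric and `d(ΩN₀) = 0`; in that case
`(X + ΩX) ∘_N (Y + ΩY) = [X,Y]_{N₀} + Ω[X,Y]_{N₀}`. -/
theorem graph_closed_under_contracted_iff
    (Ω : Derivation ℝ C^∞⟮I, M; ℝ⟯ C^∞⟮I, M; ℝ⟯ →ₗ[C^∞⟮I, M; ℝ⟯]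
      (Derivation ℝ C^∞⟮I, M; ℝ⟯ C^∞⟮I, M; ℝ⟯ →ₗ[C^∞⟮I, M; ℝ⟯] C^∞⟮I, M; ℝ⟯))
    (hΩskew : ∀ X Y : 𝓥, Ω X Y = - Ω Y X)
    (hΩclosed : ∀ X Y : 𝓥, lieD X (Ω Y) - iotaD Y (Ω X) - Ω ⁅X, Y⁆ = 0)
    (N₀ : Derivation ℝ C^∞⟮I, M; ℝ⟯ C^∞⟮I, M; ℝ⟯
      →ₗ[C^∞⟮I, M; ℝ⟯] Derivation ℝ C^∞⟮I, M; ℝ⟯ C^∞⟮I, M; ℝ⟯) :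
    ((∀ X Y : 𝓥, ∃ Z : 𝓥,
        contractedCourant (liftTop N₀) (X, Ω X) (Y, Ω Y) = (Z, Ω Z))
      ↔ ((∀ X Y : 𝓥, Ω (N₀ X) Y = - Ω (N₀ Y) X)
          ∧ (∀ X Y : 𝓥,
              lieD X (Ω (N₀ Y)) - iotaD Y (Ω (N₀ X)) - Ω (N₀ ⁅X, Y⁆) = 0)))
    ∧ (((∀ X Y : 𝓥, Ω (N₀ X) Y = - Ω (N₀ Y) X)
          ∧ (∀ X Y : 𝓥,
              lieD X (Ω (N₀ Y)) - iotaD Y (Ω (N₀ X)) - Ω (N₀ ⁅X, Y⁆) = 0)) →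
        ∀ X Y : 𝓥,
          contractedCourant (liftTop N₀) (X, Ω X) (Y, Ω Y)
            = (nbracket N₀ X Y, Ω (nbracket N₀ X Y))) :=
  graph_closed_under_contracted_iff_general Ω hΩclosed N₀
end

section
/- Let L ⊂ TM ⊕ T*M be the Dirac structure of a Poisson bivector Λ (sections Λξ + ξ) and N(X+ξ) = N₀X. If the contracted product ∘_N is skew-symmetric on sections of L, then N₀Λ is skew-symmetric: N₀Λ = Λ ᵗN₀. -/
/-! By Cartan's formula the cotangent part of `u ∘_N v + v ∘_N u`, for `u = Λξ + ξ` and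
`v = Λη + η`, is `d S(ξ, η)` with `S(ξ, η) = ⟨η, N₀Λξ⟩ + ⟨ξ, N₀Λη⟩`, so skew-symmetry of `∘_N`
makes `S(ξ, η)` a closed function. Comparing `d S(fξ, df) = 0` with `d S(ξ, df) = 0` gives
`S(ξ, df) df = 0`. By skew-symmetry of `Λ`, `S(ξ, df) = Z f` for `Z = N₀Λξ − Λ ᵗN₀ξ`, and
evaluating `(Z f) df` on `Z` gives `(Z f)² = 0`, hence `Z f = 0` for every `f`. -/

set_option linter.unusedSectionVars false

open Manifold
local notation "∞" => (⊤ : ℕ∞)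

variable {EE : Type*} [NormedAddCommGroup EE] [NormedSpace ℝ EE] [FiniteDimensional ℝ EE]
  {M : Type*} [TopologicalSpace M] [ChartedSpace EE M]
  {I : ModelWithCorners ℝ EE EE} [IsManifold I ∞ M]

local notation "𝓕" => C^∞⟮I, M; ℝ⟯
local notation "𝓥" => Derivation ℝ C^∞⟮I, M; ℝ⟯ C^∞⟮I, M; ℝ⟯
local notation "Ω¹" =>
  (Derivation ℝ C^∞⟮I, M; ℝ⟯ C^∞⟮I, M; ℝ⟯ →ₗ[C^∞⟮I, M; ℝ⟯] C^∞⟮I, M; ℝ⟯)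

noncomputable def differential (f : 𝓕) : Ω¹ where
  toFun Y := Y f
  map_add' _ _ := rfl
  map_smul' _ _ := rfl

@[simp]
theorem differential_apply (f : 𝓕) (Y : 𝓥) : differential f Y = Y f := rfl

theorem differential_add (f g : 𝓕) :
    differential (f + g) = differential f + differential g := by
  ext Y
  simp

theorem differential_mul (f g : 𝓕) :
    differential (f * g) = f • differential g + g • differential f := by
  ext Y
  simp [Derivation.leibniz]

theorem ContMDiffMap.eq_zero_of_mul_self_eq_zero {e : 𝓕} (h : e * e = 0) : e = 0 := by
  ext x
  exact mul_self_eq_zero.mp congr($h x)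

/-- Cartan's formula `L_X η = i_X dη + d(i_X η)`. -/
theorem lieD_sub_iotaD (X : 𝓥) (η : Ω¹) : lieD X η - iotaD X η = differential (η X) := by
  ext Y
  simp [lieD, iotaD]

theorem contractedCourant_liftTop_snd (N₀ : 𝓥 →ₗ[𝓕] 𝓥) (u v : 𝓥 × Ω¹) :
    (contractedCourant (liftTop N₀) u v).2 = lieD (N₀ u.1) v.2 - iotaD (N₀ v.1) u.2 := by
  ext Z
  simp [contractedCourant, courant, liftTop, lieD, iotaD]

theorem contractedCourant_liftTop_snd_add_swap (N₀ : 𝓥 →ₗ[𝓕] 𝓥) (u v : 𝓥 × Ω¹) :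
    (contractedCourant (liftTop N₀) u v).2 + (contractedCourant (liftTop N₀) v u).2
      = differential (v.2 (N₀ u.1) + u.2 (N₀ v.1)) := by
  rw [contractedCourant_liftTop_snd, contractedCourant_liftTop_snd, differential_add,
    ← lieD_sub_iotaD, ← lieD_sub_iotaD]
  abel

theorem smul_differential_eq_zero_of_symm_closed (A : Ω¹ →ₗ[𝓕] 𝓥)
    (hA : ∀ ξ η : Ω¹, differential (η (A ξ) + ξ (A η)) = 0) (ξ : Ω¹) (f : 𝓕) :
    (A ξ f + ξ (A (differential f))) • differential f = 0 := by
  set e := A ξ f + ξ (A (differential f))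
  have hde : differential e = 0 := by simpa using hA ξ (differential f)
  have hdfe : differential (f * e) = 0 := by
    simpa [e, mul_add] using hA (f • ξ) (differential f)
  rwa [differential_mul, hde, smul_zero, zero_add] at hdfe

theorem apply_eq_zero_of_smul_differential_eq_zero (Z : 𝓥) (f : 𝓕)
    (h : Z f • differential f = 0) : Z f = 0 :=
  ContMDiffMap.eq_zero_of_mul_self_eq_zero (by simpa using LinearMap.congr_fun h Z)

theorem poisson_graph_skew_contracted_implies_general
    (Λ : (Derivation ℝ C^∞⟮I, M; ℝ⟯ C^∞⟮I, M; ℝ⟯ →ₗ[C^∞⟮I, M; ℝ⟯] C^∞⟮I, M; ℝ⟯)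
      →ₗ[C^∞⟮I, M; ℝ⟯] Derivation ℝ C^∞⟮I, M; ℝ⟯ C^∞⟮I, M; ℝ⟯)
    (hΛskew : ∀ ξ η : Ω¹, ξ (Λ η) = - η (Λ ξ))
    (N₀ : Derivation ℝ C^∞⟮I, M; ℝ⟯ C^∞⟮I, M; ℝ⟯
      →ₗ[C^∞⟮I, M; ℝ⟯] Derivation ℝ C^∞⟮I, M; ℝ⟯ C^∞⟮I, M; ℝ⟯)
    (hskewN : ∀ ξ η : Ω¹,
      contractedCourant (liftTop N₀) (Λ ξ, ξ) (Λ η, η)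
        = - contractedCourant (liftTop N₀) (Λ η, η) (Λ ξ, ξ)) :
    ∀ ξ : Ω¹, N₀ (Λ ξ) = Λ (ξ ∘ₗ N₀) := by
  have hclosed : ∀ ξ η : Ω¹, differential (η (N₀ (Λ ξ)) + ξ (N₀ (Λ η))) = 0 := fun ξ η => by
    rw [← contractedCourant_liftTop_snd_add_swap N₀ (Λ ξ, ξ) (Λ η, η), hskewN ξ η,
      Prod.snd_neg, neg_add_cancel]
  intro ξ
  refine Derivation.ext fun f => ?_
  have hΛ : Λ (ξ ∘ₗ N₀) f = - ξ (N₀ (Λ (differential f))) := by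
    simpa using hΛskew (differential f) (ξ ∘ₗ N₀)
  have hZ : (N₀ (Λ ξ) - Λ (ξ ∘ₗ N₀)) f = N₀ (Λ ξ) f + ξ (N₀ (Λ (differential f))) := by
    rw [Derivation.sub_apply, hΛ, sub_neg_eq_add]
  have h := smul_differential_eq_zero_of_symm_closed (N₀ ∘ₗ Λ) hclosed ξ f
  rw [LinearMap.comp_apply, LinearMap.comp_apply, ← hZ] at h
  rw [← sub_eq_zero, ← Derivation.sub_apply]
  exact apply_eq_zero_of_smul_differential_eq_zero _ f h

/-- for the Dirac structure `L = {Λξ + ξ}` of a Poisson bivector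
`Λ` and `N(X+ξ) = N₀X`, if `∘_N` is skew-symmetric on sections of `L`, then
`N₀Λ` is skew-symmetric: `N₀Λ = Λ ᵗN₀`. -/
theorem poisson_graph_skew_contracted_implies
    (Λ : (Derivation ℝ C^∞⟮I, M; ℝ⟯ C^∞⟮I, M; ℝ⟯ →ₗ[C^∞⟮I, M; ℝ⟯] C^∞⟮I, M; ℝ⟯)
      →ₗ[C^∞⟮I, M; ℝ⟯] Derivation ℝ C^∞⟮I, M; ℝ⟯ C^∞⟮I, M; ℝ⟯)
    (hΛskew : ∀ ξ η : Ω¹, ξ (Λ η) = - η (Λ ξ))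
    (hΛpoisson : ∀ ξ η : Ω¹, ⁅Λ ξ, Λ η⁆ = Λ (lieD (Λ ξ) η - iotaD (Λ η) ξ))
    (N₀ : Derivation ℝ C^∞⟮I, M; ℝ⟯ C^∞⟮I, M; ℝ⟯
      →ₗ[C^∞⟮I, M; ℝ⟯] Derivation ℝ C^∞⟮I, M; ℝ⟯ C^∞⟮I, M; ℝ⟯)
    (hskewN : ∀ ξ η : Ω¹,
      contractedCourant (liftTop N₀) (Λ ξ, ξ) (Λ η, η)
        = - contractedCourant (liftTop N₀) (Λ η, η) (Λ ξ, ξ)) :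
    ∀ ξ : Ω¹, N₀ (Λ ξ) = Λ (ξ ∘ₗ N₀) :=
  poisson_graph_skew_contracted_implies_general Λ hΛskew N₀ hskewN
end
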